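/- arXiv:2205.08035 — 2 statements merged into one kernel-verified Lean document; each statement's English description precedes it below -/
import Mathlib

section
/- For every Λ > 0, the supremum over σ > 0 of the hazard rate h(σ,Λ)/(1 - H(σ,Λ)) is finite. -/
open Real MeasureTheory Set Filter Topology

noncomputable def fph (σ x : ℝ) : ℝ :=
  x * Real.exp (-(x - σ)^2 / (2*σ)) / Real.sqrt (2*Real.pi*σ^3)

noncomputable def erfc (z : ℝ) : ℝ :=
  (2 / Real.sqrt Real.pi) * ∫ t in Set.Ioi z, Real.exp (-t^2)

noncomputable def fpH (σ x : ℝ) : ℝ :=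
  (1/2) * (erfc ((x-σ)/Real.sqrt (2*σ)) + Real.exp (2*x) * erfc ((x+σ)/Real.sqrt (2*σ)))

noncomputable def kap (σ y x : ℝ) : ℝ :=
  Real.exp (-(y - x + σ)^2/(2*σ)) / Real.sqrt (2*Real.pi*σ) * (1 - Real.exp (-(2*x*y)/σ))

/-
With `q = √(2σ)`, `a = (x - σ)/q` and `c = 2x/q` one has `(x + σ)/q = c - a`, `c - 2a = q` and
`c (c - 2a) = 2x`. Shifting both erfc integrals to `(0, ∞)` turns `√π (1 - H)` into
`J(a, c) = ∫₀^∞ e^{-(t-a)²} (1 - e^{-2ct}) dt`, while `√π h = c e^{-a²}/q²`. So it suffices to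
bound `J` from below by integrating over one short interval:
* if `a ≥ -1`, over `(a + 2, a + 3]`, giving `J ≥ e^{-9}(1 - e^{-2c})`; the Gaussian factor
  `e^{-a²} ≤ e^{x + 1 - c}` then absorbs the powers of `c`;
* if `a < -1`, over `(u, 2u]` with `u = 1/(4|a|)`, where `(t - a)² ≤ a² + 2` and
  `1 - e^{-2ct} ≥ c/q`, giving a ratio of at most `2e²`.
-/

lemma integrable_exp_neg_sq : Integrable fun t : ℝ => exp (-t ^ 2) := by
  simpa using integrable_exp_neg_mul_sq one_pos

lemma erfc_neg (z : ℝ) : erfc (-z) = 2 - erfc z := by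
  have hsplit : (∫ t in Iic z, exp (-t ^ 2)) + ∫ t in Ioi z, exp (-t ^ 2) = √π := by
    rw [intervalIntegral.integral_Iic_add_Ioi integrable_exp_neg_sq.integrableOn
      integrable_exp_neg_sq.integrableOn]
    simpa using integral_gaussian 1
  have hreflect : (∫ t in Ioi (-z), exp (-t ^ 2)) = ∫ t in Iic z, exp (-t ^ 2) := by
    rw [← integral_comp_neg_Iic]
    simp only [neg_sq]
  rw [erfc, erfc, hreflect, eq_sub_of_add_eq hsplit]
  field_simp

lemma erfc_eq_integral_Ioi_zero (z : ℝ) :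
    erfc z = 2 / √π * ∫ t in Ioi 0, exp (-(t + z) ^ 2) := by
  rw [erfc, ← (measurePreserving_add_right volume z).setIntegral_preimage_emb
    (measurableEmbedding_addRight z) (fun t => exp (-t ^ 2)) (Ioi z)]
  simp

noncomputable def survivalIntegral (a c : ℝ) : ℝ :=
  ∫ t in Ioi 0, exp (-(t - a) ^ 2) * (1 - exp (-(2 * c * t)))

lemma exp_neg_sq_mul_one_sub_exp (a c t : ℝ) :
    exp (-(t - a) ^ 2) * (1 - exp (-(2 * c * t))) =
      exp (-(t + -a) ^ 2) - exp (c ^ 2 - 2 * c * a) * exp (-(t + (c - a)) ^ 2) := by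
  rw [mul_one_sub, ← exp_add, ← exp_add, sub_eq_add_neg t a]
  ring_nf

lemma integrable_exp_neg_sq_mul_one_sub_exp (a c : ℝ) :
    Integrable fun t => exp (-(t - a) ^ 2) * (1 - exp (-(2 * c * t))) := by
  simp only [exp_neg_sq_mul_one_sub_exp]
  exact (integrable_exp_neg_sq.comp_add_right _).sub
    ((integrable_exp_neg_sq.comp_add_right _).const_mul _)

lemma erfc_neg_sub_exp_mul_erfc (a c : ℝ) :
    erfc (-a) - exp (c ^ 2 - 2 * c * a) * erfc (c - a) = 2 / √π * survivalIntegral a c := by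
  rw [erfc_eq_integral_Ioi_zero, erfc_eq_integral_Ioi_zero, survivalIntegral, mul_left_comm,
    ← mul_sub, ← integral_const_mul, ← integral_sub
      (integrable_exp_neg_sq.comp_add_right _).integrableOn
      ((integrable_exp_neg_sq.comp_add_right _).const_mul _).integrableOn]
  simp only [exp_neg_sq_mul_one_sub_exp]

lemma mul_sub_le_setIntegral_Ioi {f : ℝ → ℝ} {z p r m : ℝ} (hf : IntegrableOn f (Ioi z))
    (hf₀ : ∀ t ∈ Ioi z, 0 ≤ f t) (hzp : z ≤ p) (hpr : p ≤ r) (hm : ∀ t ∈ Ioc p r, m ≤ f t) :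
    m * (r - p) ≤ ∫ t in Ioi z, f t := by
  have hsub : Ioc p r ⊆ Ioi z := fun t ht => lt_of_le_of_lt hzp ht.1
  calc m * (r - p) = m * volume.real (Ioc p r) := by
        rw [Real.volume_real_Ioc_of_le hpr]
    _ ≤ ∫ t in Ioc p r, f t :=
        setIntegral_ge_of_const_le_real measurableSet_Ioc (by simp) hm (hf.mono_set hsub)
    _ ≤ ∫ t in Ioi z, f t :=
        setIntegral_mono_set hf ((ae_restrict_iff' measurableSet_Ioi).mpr (.of_forall hf₀))
          hsub.eventuallyLE

lemma div_one_add_le_one_sub_exp_neg {y : ℝ} (hy : 0 ≤ y) : y / (1 + y) ≤ 1 - exp (-y) := by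
  have h : exp (-y) ≤ 1 / (1 + y) := by
    rw [exp_neg, ← one_div]
    exact one_div_le_one_div_of_le (by positivity) (by linarith [add_one_le_exp y])
  calc y / (1 + y) = 1 - 1 / (1 + y) := by field_simp; ring
    _ ≤ 1 - exp (-y) := by linarith

lemma mul_sub_le_survivalIntegral {a c p r m : ℝ} (hc : 0 ≤ c) (hp : 0 ≤ p) (hpr : p ≤ r)
    (hm : ∀ t ∈ Ioc p r, m ≤ exp (-(t - a) ^ 2) * (1 - exp (-(2 * c * t)))) :
    m * (r - p) ≤ survivalIntegral a c := by
  refine mul_sub_le_setIntegral_Ioi (integrable_exp_neg_sq_mul_one_sub_exp a c).integrableOn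
    (fun t ht => mul_nonneg (exp_nonneg _) ?_) hp hpr hm
  have : 0 ≤ 2 * c * t := mul_nonneg (by positivity) (le_of_lt ht)
  simpa using this

lemma survivalIntegral_ge_of_neg_one_le {a c : ℝ} (ha : -1 ≤ a) (hc : 0 ≤ c) :
    exp (-9) * (2 * c / (1 + 2 * c)) ≤ survivalIntegral a c := by
  have h := mul_sub_le_survivalIntegral (a := a) (m := exp (-9) * (2 * c / (1 + 2 * c))) hc
    (by linarith : 0 ≤ a + 2) (by linarith : a + 2 ≤ a + 3) fun t ⟨ht₂, ht₃⟩ => by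
      refine mul_le_mul (exp_le_exp.mpr (by nlinarith)) ?_ (by positivity) (exp_nonneg _)
      calc 2 * c / (1 + 2 * c) ≤ 1 - exp (-(2 * c)) :=
            div_one_add_le_one_sub_exp_neg (by positivity)
        _ ≤ 1 - exp (-(2 * c * t)) := sub_le_sub_left (exp_le_exp.mpr
          (by nlinarith [mul_le_mul_of_nonneg_left (show 1 ≤ t by linarith) hc])) 1
  rwa [show a + 3 - (a + 2) = 1 by ring, mul_one] at h

lemma survivalIntegral_ge_of_lt_neg_one {a c : ℝ} (ha : a < -1) (hc : 0 ≤ c) :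
    exp (-a ^ 2 - 2) * (c / (c - 2 * a)) * (1 / (4 * -a)) ≤ survivalIntegral a c := by
  have hb : 0 < -a := by linarith
  have ha₀ : a ≠ 0 := by linarith
  set u := 1 / (4 * -a) with hu
  have hu₀ : 0 < u := by positivity
  have hau : -a * u = 1 / 4 := by rw [hu]; field_simp
  have h := mul_sub_le_survivalIntegral (a := a) (m := exp (-a ^ 2 - 2) * (c / (c - 2 * a))) hc
    hu₀.le (by linarith : u ≤ 2 * u) fun t ⟨htu, ht2u⟩ => by
      have hu₁ : u ≤ 1 / 4 := by nlinarith
      refine mul_le_mul (exp_le_exp.mpr ?_) ?_ (div_nonneg hc (by linarith)) (exp_nonneg _)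
      · nlinarith [mul_le_mul_of_nonneg_left ht2u hb.le, mul_le_mul ht2u ht2u (by linarith)
          (by linarith : (0 : ℝ) ≤ 2 * u)]
      calc c / (c - 2 * a) = 2 * c * u / (1 + 2 * c * u) := by
            rw [div_eq_div_iff (by linarith) (by positivity)]
            linear_combination (-4 * c) * hau
        _ ≤ 1 - exp (-(2 * c * u)) := div_one_add_le_one_sub_exp_neg (by positivity)
        _ ≤ 1 - exp (-(2 * c * t)) := by gcongr
  rwa [show 2 * u - u = u by ring] at h

noncomputable def hazardRatio (a c : ℝ) : ℝ :=
  c * exp (-a ^ 2) / ((c - 2 * a) ^ 2 * survivalIntegral a c)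

lemma hazardRatio_le_of_lt_neg_one {a c : ℝ} (ha : a < -1) (hc : 0 < c) :
    hazardRatio a c ≤ 2 * exp 2 := by
  have hb : 0 < -a := by linarith
  have hq : 0 < c - 2 * a := by linarith
  set L := exp (-a ^ 2 - 2) * (c / (c - 2 * a)) * (1 / (4 * -a))
  have hL : 0 < L := by positivity
  have hJ : L ≤ survivalIntegral a c := survivalIntegral_ge_of_lt_neg_one ha hc.le
  rw [hazardRatio, div_le_iff₀ (by nlinarith [mul_pos (pow_pos hq 2) hL])]
  calc c * exp (-a ^ 2) ≤ c * exp (-a ^ 2) * ((c - 2 * a) / (2 * -a)) :=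
        le_mul_of_one_le_right (by positivity) ((one_le_div (by positivity)).mpr (by linarith))
    _ = 2 * exp 2 * ((c - 2 * a) ^ 2 * L) := by
        simp only [L, exp_sub]
        field_simp
        ring
    _ ≤ 2 * exp 2 * ((c - 2 * a) ^ 2 * survivalIntegral a c) := by gcongr

lemma sq_mul_one_add_two_mul_le_exp {c : ℝ} (hc : 0 ≤ c) :
    c ^ 2 * (1 + 2 * c) ≤ 14 * exp c := by
  have h₂ := pow_div_factorial_le_exp c hc 2
  have h₃ := pow_div_factorial_le_exp c hc 3
  norm_num [Nat.factorial] at h₂ h₃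
  nlinarith

lemma exp_neg_sq_mul_exp_le {a c x : ℝ} (hcx : c * (c - 2 * a) = 2 * x) :
    exp (-a ^ 2) * exp c ≤ exp (x + 1) := by
  rw [← exp_add, exp_le_exp]
  nlinarith [sq_nonneg (a - c / 2), sq_nonneg (c / 2 - 1)]

lemma hazardRatio_le_of_neg_one_le {a c x : ℝ} (ha : -1 ≤ a) (hc : 0 < c) (hx : 0 < x)
    (hcx : c * (c - 2 * a) = 2 * x) : hazardRatio a c ≤ 2 * exp (x + 10) / x ^ 2 := by
  have hq : 0 < c - 2 * a := pos_of_mul_pos_right (hcx ▸ by positivity) hc.le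
  set L := exp (-9) * (2 * c / (1 + 2 * c))
  have hL : 0 < L := by positivity
  have hJ : L ≤ survivalIntegral a c := survivalIntegral_ge_of_neg_one_le ha hc.le
  have key : c ^ 2 * (1 + 2 * c) * exp (-a ^ 2) ≤ 16 * exp (x + 1) := by
    nlinarith [sq_mul_one_add_two_mul_le_exp hc.le, exp_neg_sq_mul_exp_le hcx, exp_pos (-a ^ 2),
      exp_pos (x + 1)]
  rw [hazardRatio, div_le_div_iff₀ (by nlinarith [mul_pos (pow_pos hq 2) hL]) (by positivity)]
  calc c * exp (-a ^ 2) * x ^ 2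
      = c * (c - 2 * a) ^ 2 / (4 * (1 + 2 * c)) * (c ^ 2 * (1 + 2 * c) * exp (-a ^ 2)) := by
        rw [show x = c * (c - 2 * a) / 2 by linarith]
        field_simp
        ring
    _ ≤ c * (c - 2 * a) ^ 2 / (4 * (1 + 2 * c)) * (16 * exp (x + 1)) := by gcongr
    _ = 2 * exp (x + 10) * ((c - 2 * a) ^ 2 * L) := by
        simp only [L, show x + 10 = (x + 1) + 9 by ring, exp_add, exp_neg]
        field_simp
        ring
    _ ≤ 2 * exp (x + 10) * ((c - 2 * a) ^ 2 * survivalIntegral a c) := by gcongr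

lemma hazardRatio_le {a c x : ℝ} (hc : 0 < c) (hx : 0 < x) (hcx : c * (c - 2 * a) = 2 * x) :
    hazardRatio a c ≤ max (2 * exp 2) (2 * exp (x + 10) / x ^ 2) := by
  rcases lt_or_ge a (-1) with ha | ha
  · exact (hazardRatio_le_of_lt_neg_one ha hc).trans (le_max_left _ _)
  · exact (hazardRatio_le_of_neg_one_le ha hc hx hcx).trans (le_max_right _ _)

lemma fph_div_one_sub_fpH {σ x : ℝ} (hσ : 0 < σ) :
    fph σ x / (1 - fpH σ x) = hazardRatio ((x - σ) / √(2 * σ)) (2 * x / √(2 * σ)) := by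
  set q := √(2 * σ)
  have hq : 0 < q := sqrt_pos.mpr (by positivity)
  have hσq : σ = q ^ 2 / 2 := by rw [sq_sqrt (by positivity)]; ring
  set a := (x - σ) / q
  set c := 2 * x / q
  have hcq : c - 2 * a = q := by simp only [a, c]; rw [hσq]; field_simp; ring
  have hcx : c * q = 2 * x := by simp only [c]; field_simp
  have hfph : fph σ x = c * exp (-a ^ 2) / (√π * (c - 2 * a) ^ 2) := by
    have hsqrt : √(2 * π * σ ^ 3) = √π * (σ * q) := by
      rw [show 2 * π * σ ^ 3 = π * (σ ^ 2 * (2 * σ)) by ring, sqrt_mul pi_pos.le,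
        sqrt_mul (sq_nonneg σ), sqrt_sq hσ.le]
    have hexp : -(x - σ) ^ 2 / (2 * σ) = -a ^ 2 := by
      simp only [a]; rw [div_pow, hσq]; ring
    rw [fph, hsqrt, hexp, hcq, hσq]
    field_simp
    linarith
  have hfpH : 1 - fpH σ x = survivalIntegral a c / √π := by
    have h := erfc_neg_sub_exp_mul_erfc a c
    rw [erfc_neg, show c ^ 2 - 2 * c * a = 2 * x by rw [← hcx, ← hcq]; ring] at h
    have hxσ : (x + σ) / q = c - a := by simp only [a, c]; field_simp; ring
    rw [fpH, hxσ]
    linear_combination h / 2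
  rw [hfph, hfpH, hazardRatio, div_mul_eq_div_div_swap,
    div_div_div_cancel_right₀ (sqrt_pos.mpr pi_pos).ne', div_div]

theorem hazard_rate_bounded (Λ : ℝ) (hΛ : 0 < Λ) :
    ∃ M : ℝ, ∀ σ : ℝ, 0 < σ → fph σ Λ / (1 - fpH σ Λ) ≤ M := by
  refine ⟨max (2 * exp 2) (2 * exp (Λ + 10) / Λ ^ 2), fun σ hσ => ?_⟩
  rw [fph_div_one_sub_fpH hσ]
  refine hazardRatio_le (by positivity) hΛ ?_
  have hsq := sq_sqrt (by positivity : (0 : ℝ) ≤ 2 * σ)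
  field_simp
  rw [hsq]
  ring
end

section
/- For every Λ > 0 and every fixed σ ≥ 0, lim_{τ→∞} |∂_σ h(τ + σ, Λ)|/(1 - H(τ, Λ)) = e^{-σ/2}/4. -/
open Real MeasureTheory Set Filter Topology

/-!
Let `M z = e^{z²} ∫_z^∞ e^{-t²} dt` be the Mills ratio of the Gaussian and `z₋, z₊ = (τ ∓ Λ)/√(2τ)`.
Since `erfc (-z) = 2 - erfc z`, `z₋² = τ/2 - Λ + Λ²/(2τ)` and `z₊² = z₋² + 2Λ`, the two terms of `H`
combine to
`1 - H(τ, Λ) = e^{Λ - Λ²/(2τ) - τ/2} (M z₋ - M z₊) / √π`.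
Two integrations by parts give `1/(2z²) - 3/(4z⁴) ≤ 1 - 2zM(z) ≤ 1/(2z²)`, and `M' = 2zM - 1`, so
by the mean value theorem `M z₋ - M z₊ ~ (z₊ - z₋)/(2z²) ~ √2 Λ τ^{-3/2}`.
On the other hand `∂_σ h(s, Λ) = h(s, Λ) (Λ²/(2s²) - 1/2 - 3/(2s)) ~ -h(s, Λ)/2`, so after
multiplying numerator and denominator by `τ^{3/2} e^{τ/2}` both converge, and the constants
combine to `e^{-σ/2}/4`.
-/
noncomputable def gaussTail (z : ℝ) : ℝ := ∫ t in Ioi z, exp (-t ^ 2)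

lemma gaussTail_neg (z : ℝ) : gaussTail (-z) = √π - gaussTail z := by
  have hsplit := intervalIntegral.integral_Iic_add_Ioi (b := -z)
    integrable_exp_neg_sq.integrableOn integrable_exp_neg_sq.integrableOn
  have hrefl : ∫ t in Iic (-z), exp (-t ^ 2) = gaussTail z := by
    rw [← integral_comp_neg_Ioi]
    simp [gaussTail]
  have htotal : ∫ t : ℝ, exp (-t ^ 2) = √π := by simpa using integral_gaussian 1
  rw [← htotal, ← hsplit, hrefl, gaussTail]
  ring

lemma hasDerivAt_gaussTail (z : ℝ) : HasDerivAt gaussTail (-exp (-z ^ 2)) z := by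
  have hdiff : gaussTail = fun z => gaussTail 0 - ∫ t in (0)..z, exp (-t ^ 2) := by
    funext z
    rw [← intervalIntegral.integral_Ioi_sub_Ioi' integrable_exp_neg_sq.integrableOn
      integrable_exp_neg_sq.integrableOn, gaussTail, gaussTail, sub_sub_cancel]
  rw [hdiff]
  exact ((by fun_prop : Continuous fun t : ℝ => exp (-t ^ 2)).integral_hasStrictDerivAt
    0 z).hasDerivAt.const_sub _

lemma integrableOn_exp_neg_sq_div_pow {z : ℝ} (hz : 0 < z) (n : ℕ) :
    IntegrableOn (fun t => exp (-t ^ 2) / t ^ n) (Ioi z) := by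
  refine Integrable.mono' (integrable_exp_neg_sq.div_const (z ^ n)).integrableOn
    (by fun_prop : Measurable fun t : ℝ => exp (-t ^ 2) / t ^ n).aestronglyMeasurable ?_
  filter_upwards [ae_restrict_mem measurableSet_Ioi] with t ht
  rw [norm_div, Real.norm_of_nonneg (exp_pos _).le, norm_pow, Real.norm_of_nonneg (hz.trans ht).le]
  gcongr
  exact ht.le

lemma integral_exp_neg_sq_div_pow_add {z : ℝ} (hz : 0 < z) (k : ℕ) :
    (∫ t in Ioi z, exp (-t ^ 2) / t ^ k) + (k + 1) / 2 * ∫ t in Ioi z, exp (-t ^ 2) / t ^ (k + 2)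
      = exp (-z ^ 2) / (2 * z ^ (k + 1)) := by
  -- `-e^{-t²}/(2tᵏ⁺¹)` is an antiderivative of the integrand
  have hderiv : ∀ x ∈ Ici z, HasDerivAt (fun t => -exp (-t ^ 2) / (2 * t ^ (k + 1)))
      (exp (-x ^ 2) / x ^ k + (k + 1) / 2 * (exp (-x ^ 2) / x ^ (k + 2))) x := by
    intro x hx
    have hx0 : 0 < x := hz.trans_le hx
    have h := (((hasDerivAt_pow 2 x).fun_neg.exp).fun_neg).fun_div
      ((hasDerivAt_pow (k + 1) x).const_mul 2) (by positivity)
    refine h.congr_deriv ?_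
    field_simp
    push_cast
    ring
  have hlim : Tendsto (fun t => -exp (-t ^ 2) / (2 * t ^ (k + 1))) atTop (𝓝 0) := by
    have hexp : Tendsto (fun t : ℝ => exp (-t ^ 2)) atTop (𝓝 0) :=
      tendsto_exp_atBot.comp (tendsto_neg_atTop_atBot.comp (tendsto_pow_atTop two_ne_zero))
    simpa using hexp.neg.div_atTop
      ((tendsto_pow_atTop k.succ_ne_zero).const_mul_atTop two_pos)
  rw [← integral_const_mul, ← integral_add (integrableOn_exp_neg_sq_div_pow hz k)
    ((integrableOn_exp_neg_sq_div_pow hz (k + 2)).const_mul _),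
    integral_Ioi_of_hasDerivAt_of_tendsto' hderiv
      ((integrableOn_exp_neg_sq_div_pow hz k).add
        ((integrableOn_exp_neg_sq_div_pow hz (k + 2)).const_mul _)) hlim]
  ring

lemma integral_exp_neg_sq_div_pow_add_two_le {z : ℝ} (hz : 0 < z) (k : ℕ) :
    ∫ t in Ioi z, exp (-t ^ 2) / t ^ (k + 2) ≤ (∫ t in Ioi z, exp (-t ^ 2) / t ^ k) / z ^ 2 := by
  rw [div_eq_mul_inv, mul_comm, ← integral_const_mul]
  refine setIntegral_mono_on (integrableOn_exp_neg_sq_div_pow hz _)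
    ((integrableOn_exp_neg_sq_div_pow hz k).const_mul _) measurableSet_Ioi fun t ht => ?_
  have ht0 : 0 < t := hz.trans ht
  rw [pow_add, ← div_div, div_eq_mul_inv _ (t ^ 2), mul_comm]
  gcongr
  exact ht.le

noncomputable def millsRatio (z : ℝ) : ℝ := exp (z ^ 2) * gaussTail z

lemma gaussTail_eq_exp_mul_millsRatio (z : ℝ) : gaussTail z = exp (-z ^ 2) * millsRatio z := by
  rw [millsRatio, ← mul_assoc, ← exp_add, neg_add_cancel, exp_zero, one_mul]

lemma hasDerivAt_millsRatio (z : ℝ) : HasDerivAt millsRatio (2 * z * millsRatio z - 1) z := by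
  have h := ((hasDerivAt_pow 2 z).exp).mul (hasDerivAt_gaussTail z)
  refine h.congr_deriv ?_
  rw [millsRatio, mul_neg, ← exp_add, add_neg_cancel, exp_zero]
  push_cast
  ring

lemma millsRatio_bounds {z : ℝ} (hz : 0 < z) :
    1 / (2 * z) - 1 / (4 * z ^ 3) ≤ millsRatio z ∧
      millsRatio z ≤ 1 / (2 * z) - 1 / (4 * z ^ 3) + 3 / (8 * z ^ 5) := by
  have h0 := integral_exp_neg_sq_div_pow_add hz 0
  have h2 := integral_exp_neg_sq_div_pow_add hz 2
  have h4 := integral_exp_neg_sq_div_pow_add_two_le hz 2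
  have h4nonneg : 0 ≤ ∫ t in Ioi z, exp (-t ^ 2) / t ^ 4 :=
    setIntegral_nonneg measurableSet_Ioi fun t _ => by positivity
  simp only [pow_zero, div_one] at h0
  change gaussTail z + _ = _ at h0
  rw [gaussTail_eq_exp_mul_millsRatio] at h0
  norm_num at h0 h2 h4
  set E := exp (-z ^ 2)
  set T₂ := ∫ t in Ioi z, exp (-t ^ 2) / t ^ 2
  have hE : 0 < E := exp_pos _
  have hT₂_le : T₂ ≤ E / (2 * z ^ 3) := by linarith
  have hT₂_ge : E / (2 * z ^ 3) - 3 * E / (4 * z ^ 5) ≤ T₂ := by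
    have : T₂ / z ^ 2 ≤ E / (2 * z ^ 5) := by
      calc T₂ / z ^ 2 ≤ E / (2 * z ^ 3) / z ^ 2 := by gcongr
        _ = E / (2 * z ^ 5) := by field_simp
    have : 3 * E / (4 * z ^ 5) = 3 / 2 * (E / (2 * z ^ 5)) := by field_simp; ring
    linarith
  constructor
  · refine le_of_mul_le_mul_left ?_ hE
    have : E * (1 / (2 * z) - 1 / (4 * z ^ 3)) = E / (2 * z) - (E / (2 * z ^ 3)) / 2 := by ring
    linarith
  · refine le_of_mul_le_mul_left ?_ hE
    have : E * (1 / (2 * z) - 1 / (4 * z ^ 3) + 3 / (8 * z ^ 5))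
        = E / (2 * z) - (E / (2 * z ^ 3) - 3 * E / (4 * z ^ 5)) / 2 := by ring
    linarith

lemma millsRatio_sub_bounds {a b : ℝ} (ha : 0 < a) (hab : a < b) :
    (b - a) * (1 / (2 * b ^ 2) - 3 / (4 * a ^ 4)) ≤ millsRatio a - millsRatio b ∧
      millsRatio a - millsRatio b ≤ (b - a) / (2 * a ^ 2) := by
  obtain ⟨ξ, ⟨haξ, hξb⟩, hslope⟩ := exists_hasDerivAt_eq_slope millsRatio _ hab
    (fun x _ => (hasDerivAt_millsRatio x).continuousAt.continuousWithinAt)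
    (fun x _ => hasDerivAt_millsRatio x)
  have hξ : 0 < ξ := ha.trans haξ
  have hba : 0 < b - a := sub_pos.2 hab
  have hdiff : millsRatio a - millsRatio b = (b - a) * (1 - 2 * ξ * millsRatio ξ) := by
    rw [eq_div_iff hba.ne'] at hslope
    linarith
  obtain ⟨hlow, hupp⟩ := millsRatio_bounds hξ
  have hupp' : 1 - 2 * ξ * millsRatio ξ ≤ 1 / (2 * a ^ 2) :=
    calc 1 - 2 * ξ * millsRatio ξ ≤ 1 - 2 * ξ * (1 / (2 * ξ) - 1 / (4 * ξ ^ 3)) := by gcongr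
      _ = 1 / (2 * ξ ^ 2) := by field_simp; ring
      _ ≤ 1 / (2 * a ^ 2) := by gcongr
  have hlow' : 1 / (2 * b ^ 2) - 3 / (4 * a ^ 4) ≤ 1 - 2 * ξ * millsRatio ξ :=
    calc 1 / (2 * b ^ 2) - 3 / (4 * a ^ 4) ≤ 1 / (2 * ξ ^ 2) - 3 / (4 * ξ ^ 4) := by
          gcongr
      _ = 1 - 2 * ξ * (1 / (2 * ξ) - 1 / (4 * ξ ^ 3) + 3 / (8 * ξ ^ 5)) := by field_simp; ring
      _ ≤ 1 - 2 * ξ * millsRatio ξ := by gcongr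
  rw [hdiff, div_eq_mul_one_div (b - a)]
  exact ⟨by gcongr, by gcongr⟩

lemma tendsto_div_sub_const_atTop (c : ℝ) : Tendsto (fun τ : ℝ => τ / (τ - c)) atTop (𝓝 1) := by
  have hden : Tendsto (fun τ : ℝ => τ - c) atTop atTop :=
    tendsto_atTop_add_const_right _ _ tendsto_id
  have h := (tendsto_const_nhds (x := c)).div_atTop hden |>.const_add 1
  rw [add_zero] at h
  refine h.congr' ?_
  filter_upwards [hden.eventually_gt_atTop 0] with τ hτ
  field_simp
  ring

lemma scaled_millsRatio_sub_mem_Icc {Λ τ : ℝ} (hΛ : 0 < Λ) (hτ : Λ < τ) :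
    τ * √τ * (millsRatio ((τ - Λ) / √(2 * τ)) - millsRatio ((τ + Λ) / √(2 * τ))) ∈
      Icc (√2 * Λ * ((τ / (τ + Λ)) ^ 2 - 3 * (τ / (τ - Λ)) ^ 4 / τ))
        (√2 * Λ * (τ / (τ - Λ)) ^ 2) := by
  have hτ0 : 0 < τ := hΛ.trans hτ
  have hτΛ : 0 < τ - Λ := sub_pos.2 hτ
  set a := (τ - Λ) / √(2 * τ) with ha_def
  set b := (τ + Λ) / √(2 * τ) with hb_def
  have hsq_a : a ^ 2 = (τ - Λ) ^ 2 / (2 * τ) := by rw [div_pow, sq_sqrt (by positivity)]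
  have hsq_b : b ^ 2 = (τ + Λ) ^ 2 / (2 * τ) := by rw [div_pow, sq_sqrt (by positivity)]
  have hwidth : τ * √τ * (b - a) = √2 * Λ * τ := by
    have : 0 < √τ := sqrt_pos.2 hτ0
    rw [ha_def, hb_def, sqrt_mul zero_le_two τ]
    field_simp
    rw [sq_sqrt zero_le_two]
    ring
  obtain ⟨hlow, hupp⟩ := millsRatio_sub_bounds (a := a) (b := b) (by positivity)
    (div_lt_div_of_pos_right (by linarith) (by positivity))
  constructor
  · calc √2 * Λ * ((τ / (τ + Λ)) ^ 2 - 3 * (τ / (τ - Λ)) ^ 4 / τ)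
        = τ * √τ * (b - a) * (1 / (2 * b ^ 2) - 3 / (4 * (a ^ 2) ^ 2)) := by
          rw [hwidth, hsq_a, hsq_b]; field_simp; ring
      _ ≤ τ * √τ * (millsRatio a - millsRatio b) := by
          rw [mul_assoc, ← pow_mul]; gcongr
  · calc τ * √τ * (millsRatio a - millsRatio b) ≤ τ * √τ * ((b - a) / (2 * a ^ 2)) := by gcongr
      _ = √2 * Λ * (τ / (τ - Λ)) ^ 2 := by
          rw [← mul_div_assoc, hwidth, hsq_a]; field_simp

lemma tendsto_scaled_millsRatio_sub {Λ : ℝ} (hΛ : 0 < Λ) :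
    Tendsto (fun τ => τ * √τ *
        (millsRatio ((τ - Λ) / √(2 * τ)) - millsRatio ((τ + Λ) / √(2 * τ))))
      atTop (𝓝 (√2 * Λ)) := by
  have hplus : Tendsto (fun τ : ℝ => τ / (τ + Λ)) atTop (𝓝 1) := by
    simpa using tendsto_div_sub_const_atTop (-Λ)
  have hminus := tendsto_div_sub_const_atTop Λ
  have hlow : Tendsto (fun τ : ℝ => √2 * Λ * ((τ / (τ + Λ)) ^ 2 - 3 * (τ / (τ - Λ)) ^ 4 / τ))
      atTop (𝓝 (√2 * Λ)) := by
    simpa using ((hplus.pow 2).sub ((hminus.pow 4).const_mul 3 |>.div_atTop tendsto_id)).const_mul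
      (√2 * Λ)
  have hupp : Tendsto (fun τ : ℝ => √2 * Λ * (τ / (τ - Λ)) ^ 2) atTop (𝓝 (√2 * Λ)) := by
    simpa using (hminus.pow 2).const_mul (√2 * Λ)
  refine tendsto_of_tendsto_of_tendsto_of_le_of_le' hlow hupp ?_ ?_ <;>
    filter_upwards [eventually_gt_atTop Λ] with τ hτ
  exacts [(scaled_millsRatio_sub_mem_Icc hΛ hτ).1, (scaled_millsRatio_sub_mem_Icc hΛ hτ).2]

lemma one_sub_fpH_eq {τ : ℝ} (Λ : ℝ) (hτ : 0 < τ) :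
    1 - fpH τ Λ = exp (Λ - Λ ^ 2 / (2 * τ) - τ / 2) / √π *
      (millsRatio ((τ - Λ) / √(2 * τ)) - millsRatio ((τ + Λ) / √(2 * τ))) := by
  have hsq (c : ℝ) : (c / √(2 * τ)) ^ 2 = c ^ 2 / (2 * τ) := by
    rw [div_pow, sq_sqrt (by positivity)]
  have hexp_a : exp (-((τ - Λ) / √(2 * τ)) ^ 2) = exp (Λ - Λ ^ 2 / (2 * τ) - τ / 2) := by
    rw [hsq]; congr 1; field_simp; ring
  have hexp_b : exp (2 * Λ) * exp (-((τ + Λ) / √(2 * τ)) ^ 2) =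
      exp (Λ - Λ ^ 2 / (2 * τ) - τ / 2) := by
    rw [← exp_add, hsq]; congr 1; field_simp; ring
  have hπ : 0 < √π := sqrt_pos.2 pi_pos
  rw [fpH, erfc, erfc, ← gaussTail, ← gaussTail,
    show (Λ - τ) / √(2 * τ) = -((τ - Λ) / √(2 * τ)) by ring, add_comm Λ τ, gaussTail_neg,
    gaussTail_eq_exp_mul_millsRatio, gaussTail_eq_exp_mul_millsRatio, hexp_a, ← hexp_b]
  field_simp
  ring

lemma tendsto_scaled_one_sub_fpH {Λ : ℝ} (hΛ : 0 < Λ) :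
    Tendsto (fun τ => τ * √τ * exp (τ / 2) * (1 - fpH τ Λ)) atTop
      (𝓝 (√2 * Λ * exp Λ / √π)) := by
  have hexp : Tendsto (fun τ : ℝ => exp (Λ - Λ ^ 2 / (2 * τ)) / √π) atTop (𝓝 (exp Λ / √π)) := by
    have h := (tendsto_const_nhds (x := Λ ^ 2)).div_atTop (tendsto_id.const_mul_atTop two_pos)
    simpa using ((h.const_sub Λ).rexp).div_const √π
  have h := hexp.mul (tendsto_scaled_millsRatio_sub hΛ)
  rw [show exp Λ / √π * (√2 * Λ) = √2 * Λ * exp Λ / √π by ring] at h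
  refine h.congr' ?_
  filter_upwards [eventually_gt_atTop 0] with τ hτ
  rw [one_sub_fpH_eq Λ hτ, sub_eq_add_neg _ (τ / 2), exp_add]
  field_simp
  rw [mul_assoc, ← exp_add, add_neg_cancel, exp_zero, mul_one]

lemma hasDerivAt_fph {s : ℝ} (Λ : ℝ) (hs : 0 < s) :
    HasDerivAt (fun s => fph s Λ) (fph s Λ * (Λ ^ 2 / (2 * s ^ 2) - 1 / 2 - 3 / (2 * s))) s := by
  have hq : 0 < 2 * π * s ^ 3 := by positivity
  have hexponent :
      HasDerivAt (fun s => -(Λ - s) ^ 2 / (2 * s)) (Λ ^ 2 / (2 * s ^ 2) - 1 / 2) s := by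
    have h := (((hasDerivAt_id' s).const_sub Λ).fun_pow 2).fun_neg.fun_div
      ((hasDerivAt_id' s).const_mul 2) (by positivity)
    refine h.congr_deriv ?_
    field_simp
    ring
  have h := (hexponent.exp.const_mul Λ).fun_div
    (((hasDerivAt_pow 3 s).const_mul (2 * π)).sqrt hq.ne') (sqrt_pos.2 hq).ne'
  refine h.congr_deriv ?_
  have hroot_sq : √(2 * π * s ^ 3) ^ 2 = 2 * π * s ^ 3 := sq_sqrt hq.le
  have hroot_ne : √(2 * π * s ^ 3) ≠ 0 := (sqrt_pos.2 hq).ne'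
  rw [fph]
  generalize √(2 * π * s ^ 3) = q at hroot_sq hroot_ne ⊢
  field_simp
  norm_num
  linear_combination 3 * Λ * s * hroot_sq

lemma fph_eq {s : ℝ} (Λ : ℝ) (hs : 0 < s) :
    fph s Λ = Λ / √(2 * π) * exp (Λ - s / 2 - Λ ^ 2 / (2 * s)) / (s * √s) := by
  have hroot : √(2 * π * s ^ 3) = √(2 * π) * (s * √s) := by
    rw [sqrt_mul (by positivity), show s ^ 3 = s ^ 2 * s by ring, sqrt_mul (sq_nonneg s),
      sqrt_sq hs.le]
  rw [fph, hroot, show -(Λ - s) ^ 2 / (2 * s) = Λ - s / 2 - Λ ^ 2 / (2 * s) by field_simp; ring]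
  ring

lemma tendsto_scaled_abs_deriv_fph {Λ : ℝ} (hΛ : 0 < Λ) (σ : ℝ) :
    Tendsto (fun τ => τ * √τ * exp (τ / 2) * |deriv (fun s => fph s Λ) (τ + σ)|) atTop
      (𝓝 (Λ * exp (Λ - σ / 2) / (2 * √(2 * π)))) := by
  have hshift : Tendsto (fun τ : ℝ => τ + σ) atTop atTop :=
    tendsto_atTop_add_const_right _ σ tendsto_id
  have hratio : Tendsto (fun τ : ℝ => τ / (τ + σ)) atTop (𝓝 1) := by
    simpa using tendsto_div_sub_const_atTop (-σ)
  have hexp : Tendsto (fun τ : ℝ => exp (Λ - σ / 2 - Λ ^ 2 / (2 * (τ + σ)))) atTop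
      (𝓝 (exp (Λ - σ / 2))) := by
    simpa using ((tendsto_const_nhds.div_atTop (hshift.const_mul_atTop two_pos)).const_sub
      (Λ - σ / 2)).rexp
  have hrate : Tendsto (fun s : ℝ => |Λ ^ 2 / (2 * s ^ 2) - 1 / 2 - 3 / (2 * s)|) atTop
      (𝓝 (1 / 2)) := by
    have h := ((tendsto_const_nhds (x := Λ ^ 2)).div_atTop
      ((tendsto_pow_atTop two_ne_zero).const_mul_atTop two_pos)).sub_const (1 / 2) |>.sub
      ((tendsto_const_nhds (x := (3 : ℝ))).div_atTop (tendsto_id.const_mul_atTop two_pos))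
    simpa [abs_of_pos] using h.abs
  have h := ((((hratio.mul hratio.sqrt).const_mul (Λ / √(2 * π))).mul hexp).mul
    (hrate.comp hshift))
  rw [show Λ / √(2 * π) * (1 * √1) * exp (Λ - σ / 2) * (1 / 2) =
    Λ * exp (Λ - σ / 2) / (2 * √(2 * π)) by simp; ring] at h
  refine h.congr' ?_
  filter_upwards [eventually_gt_atTop 0, hshift.eventually_gt_atTop 0] with τ hτ hτσ
  rw [(hasDerivAt_fph Λ hτσ).deriv, fph_eq Λ hτσ, abs_mul, abs_of_pos (by positivity),
    sqrt_div hτ.le]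
  simp only [Function.comp]
  have : exp (τ / 2) * exp (Λ - (τ + σ) / 2 - Λ ^ 2 / (2 * (τ + σ))) =
      exp (Λ - σ / 2 - Λ ^ 2 / (2 * (τ + σ))) := by
    rw [← exp_add]; ring_nf
  rw [← this]
  have : 0 < √(τ + σ) := sqrt_pos.2 hτσ
  field_simp

theorem shifted_deriv_hazard_limit_general (Λ σ : ℝ) (hΛ : 0 < Λ) :
    Filter.Tendsto (fun τ => |deriv (fun s => fph s Λ) (τ + σ)| / (1 - fpH τ Λ))
      Filter.atTop (nhds (Real.exp (-σ/2) / 4)) := by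
  have h := (tendsto_scaled_abs_deriv_fph hΛ σ).div (tendsto_scaled_one_sub_fpH hΛ)
    (by positivity)
  have hlimit :
      Λ * exp (Λ - σ / 2) / (2 * √(2 * π)) / (√2 * Λ * exp Λ / √π) = exp (-σ / 2) / 4 := by
    rw [sqrt_mul zero_le_two, show Λ - σ / 2 = -σ / 2 + Λ by ring, exp_add]
    have : √2 ^ 2 = 2 := sq_sqrt zero_le_two
    field_simp
    linear_combination -2 * this
  rw [hlimit] at h
  refine h.congr' ?_
  filter_upwards [eventually_gt_atTop 0] with τ hτ
  exact mul_div_mul_left _ _ (by positivity)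

theorem shifted_deriv_hazard_limit (Λ σ : ℝ) (hΛ : 0 < Λ) (hσ : 0 ≤ σ) :
    Filter.Tendsto (fun τ => |deriv (fun s => fph s Λ) (τ + σ)| / (1 - fpH τ Λ))
      Filter.atTop (nhds (Real.exp (-σ/2) / 4)) :=
  shifted_deriv_hazard_limit_general Λ σ hΛ
end
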